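/- arXiv:1711.02869 — 2 statements merged into one kernel-verified Lean document; each statement's English description precedes it below -/
import Mathlib

section
/- Fix D ≥ 2, c₀ > 0 and B > 0. There exists a constant C > 0, depending only on D, c₀ and B, such that for all D×D real lower triangular matrices L₀, L₁ with |L_i j j| ≥ c₀ for all j and |(L_i) j k| ≤ B for all j, k (i = 0, 1), setting Σ_i = L_i L_iᵀ and letting p_i(y) = (2π)^{-D/2} (det Σ_i)^{-1/2} exp(−½ yᵀ Σ_i⁻¹ y) be the centered Gaussian densities, one has ∫_{ℝ^D} p₀(y) log(p₀(y)/p₁(y)) dy ≤ C · max_{j,k} |(L₀) j k − (L₁) j k|. -/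
/-!
Substituting `y = L₀ x` turns `p₀` into the standard normal density `φ`, and since a standard
normal vector has identity second moments, `∫ φ(x) xᵀ M x dx = tr M`. This gives the closed form
`K(p₀, p₁) = log |det L₁| - log |det L₀| + (tr (AᵀA) - D) / 2` with `A = L₁⁻¹ L₀`.

Write `A = 1 + E` with `E = L₁⁻¹ (L₀ - L₁)`, so that the trace term is `tr E + tr (EᵀE) / 2`.
Since `|det L₁| ≥ c₀ ^ D`, the adjugate formula bounds the entries of `L₁⁻¹` by a constant, so the
entries of `E` are `O(‖L₀ - L₁‖_∞)`. The determinants of triangular matrices are the products of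
their diagonals, and `log |b| - log |a| ≤ |b - a| / c₀` bounds the log-determinant term.
-/

open Matrix MeasureTheory

/-- The multivariate normal density on `ℝ^D` with mean `μ` and covariance `S`. -/
noncomputable def gaussianDensity (D : ℕ) (μ : Fin D → ℝ)
    (S : Matrix (Fin D) (Fin D) ℝ) (y : Fin D → ℝ) : ℝ :=
  (2 * Real.pi) ^ (-(D : ℝ) / 2) * S.det ^ (-(1 : ℝ) / 2) *
    Real.exp (-(1 / 2) * ((y - μ) ⬝ᵥ (S⁻¹ *ᵥ (y - μ))))

open ProbabilityTheory

section GaussianReal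

lemma integrable_gaussianPDFReal_mul_iff {h : ℝ → ℝ} :
    Integrable (fun t ↦ gaussianPDFReal 0 1 t * h t) ↔ Integrable h (gaussianReal 0 1) := by
  rw [gaussianReal_of_var_ne_zero _ one_ne_zero,
    integrable_withDensity_iff_integrable_smul' (measurable_gaussianPDF _ _)
      (ae_of_all _ fun _ ↦ gaussianPDF_lt_top)]
  simp [toReal_gaussianPDF]

lemma integral_gaussianPDFReal_mul (h : ℝ → ℝ) :
    ∫ t, gaussianPDFReal 0 1 t * h t = ∫ t, h t ∂gaussianReal 0 1 :=
  (integral_gaussianReal_eq_integral_smul one_ne_zero).symm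

lemma integral_mul_self_gaussianReal : ∫ t, t * t ∂gaussianReal 0 1 = 1 := by
  have h := variance_fun_id_gaussianReal (μ := 0) (v := 1)
  rw [variance_eq_integral measurable_id'.aemeasurable] at h
  simpa [sq] using h

lemma integrable_ite_mul_ite_gaussianReal (p q : Prop) [Decidable p] [Decidable q] :
    Integrable (fun t : ℝ ↦ (if p then t else 1) * (if q then t else 1)) (gaussianReal 0 1) := by
  have h_id : Integrable (fun t : ℝ ↦ t) (gaussianReal 0 1) :=
    (memLp_id_gaussianReal 1).integrable le_rfl
  split_ifs
  · simpa [sq] using (memLp_id_gaussianReal 2).integrable_sq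
  · simpa using h_id
  · simpa using h_id
  · exact integrable_const _

end GaussianReal

section StdGaussianPDF

variable {ι : Type*} [Fintype ι]

noncomputable def stdGaussianPDF (x : ι → ℝ) : ℝ := ∏ i, gaussianPDFReal 0 1 (x i)

lemma stdGaussianPDF_pos (x : ι → ℝ) : 0 < stdGaussianPDF x :=
  Finset.prod_pos fun _ _ ↦ gaussianPDFReal_pos _ _ _ one_ne_zero

lemma stdGaussianPDF_eq (x : ι → ℝ) :
    stdGaussianPDF x =
      (2 * Real.pi) ^ (-(Fintype.card ι : ℝ) / 2) * Real.exp (-(1 / 2) * (x ⬝ᵥ x)) := by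
  have h2π : 0 ≤ 2 * Real.pi := by positivity
  simp only [stdGaussianPDF, gaussianPDFReal, Finset.prod_mul_distrib, Finset.prod_const,
    ← Real.exp_sum, dotProduct, Finset.mul_sum, Finset.card_univ]
  congr 1
  · rw [NNReal.coe_one, mul_one, Real.sqrt_eq_rpow, ← Real.rpow_neg h2π, ← Real.rpow_natCast,
      ← Real.rpow_mul h2π]
    ring_nf
  · congr 1
    exact Finset.sum_congr rfl fun _ _ ↦ by simp only [sub_zero, NNReal.coe_one, mul_one]; ring

lemma log_stdGaussianPDF (x : ι → ℝ) :
    Real.log (stdGaussianPDF x) =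
      -(Fintype.card ι : ℝ) / 2 * Real.log (2 * Real.pi) - (1 / 2) * (x ⬝ᵥ x) := by
  rw [stdGaussianPDF_eq, Real.log_mul (by positivity) (Real.exp_pos _).ne', Real.log_exp,
    Real.log_rpow (by positivity)]
  ring

lemma integrable_stdGaussianPDF : Integrable (stdGaussianPDF (ι := ι)) :=
  Integrable.fintype_prod fun _ ↦ integrable_gaussianPDFReal 0 1

lemma integral_stdGaussianPDF : ∫ x : ι → ℝ, stdGaussianPDF x = 1 := by
  simp [stdGaussianPDF, integral_fintype_prod_volume_eq_prod, integral_gaussianPDFReal_eq_one]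

lemma stdGaussianPDF_mul_dotProduct_mulVec (M : Matrix ι ι ℝ) (x : ι → ℝ) :
    stdGaussianPDF x * (x ⬝ᵥ M *ᵥ x) = ∑ j, ∑ k, M j k * (stdGaussianPDF x * (x j * x k)) := by
  simp only [dotProduct, mulVec, Finset.mul_sum]
  exact Finset.sum_congr rfl fun _ _ ↦ Finset.sum_congr rfl fun _ _ ↦ by ring

variable [DecidableEq ι]

-- Splitting `x j * x k` into one-variable factors lets Fubini separate the integral.
lemma stdGaussianPDF_mul_coord_mul_coord (j k : ι) (x : ι → ℝ) :
    stdGaussianPDF x * (x j * x k) = ∏ i, gaussianPDFReal 0 1 (x i) *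
      ((if i = j then x i else 1) * (if i = k then x i else 1)) := by
  simp only [Finset.prod_mul_distrib, Finset.prod_ite_eq', Finset.mem_univ, if_true,
    stdGaussianPDF]

lemma integrable_stdGaussianPDF_mul_coord_mul_coord (j k : ι) :
    Integrable fun x : ι → ℝ ↦ stdGaussianPDF x * (x j * x k) := by
  simp_rw [stdGaussianPDF_mul_coord_mul_coord j k]
  exact Integrable.fintype_prod fun i ↦
    integrable_gaussianPDFReal_mul_iff.2 (integrable_ite_mul_ite_gaussianReal _ _)

lemma integral_stdGaussianPDF_mul_coord_mul_coord (j k : ι) :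
    ∫ x : ι → ℝ, stdGaussianPDF x * (x j * x k) = if j = k then 1 else 0 := by
  simp_rw [stdGaussianPDF_mul_coord_mul_coord j k]
  rw [integral_fintype_prod_volume_eq_prod (fun i t ↦ gaussianPDFReal 0 1 t *
      ((if i = j then t else 1) * (if i = k then t else 1)))]
  simp_rw [integral_gaussianPDFReal_mul]
  split_ifs with hjk
  · subst hjk
    refine Finset.prod_eq_one fun i _ ↦ ?_
    split_ifs
    · exact integral_mul_self_gaussianReal
    · simp
  · refine Finset.prod_eq_zero (Finset.mem_univ j) ?_
    simp [hjk]

lemma integrable_stdGaussianPDF_mul_dotProduct_mulVec (M : Matrix ι ι ℝ) :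
    Integrable fun x : ι → ℝ ↦ stdGaussianPDF x * (x ⬝ᵥ M *ᵥ x) := by
  simp_rw [stdGaussianPDF_mul_dotProduct_mulVec]
  exact integrable_finsetSum _ fun j _ ↦ integrable_finsetSum _ fun k _ ↦
    (integrable_stdGaussianPDF_mul_coord_mul_coord j k).const_mul _

lemma integral_stdGaussianPDF_mul_dotProduct_mulVec (M : Matrix ι ι ℝ) :
    ∫ x : ι → ℝ, stdGaussianPDF x * (x ⬝ᵥ M *ᵥ x) = M.trace := by
  have hint (j k : ι) : Integrable fun x : ι → ℝ ↦ M j k * (stdGaussianPDF x * (x j * x k)) :=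
    (integrable_stdGaussianPDF_mul_coord_mul_coord j k).const_mul _
  simp_rw [stdGaussianPDF_mul_dotProduct_mulVec]
  rw [integral_finsetSum _ fun j _ ↦ integrable_finsetSum _ fun k _ ↦ hint j k]
  simp_rw [integral_finsetSum _ fun k _ ↦ hint _ k, integral_const_mul,
    integral_stdGaussianPDF_mul_coord_mul_coord]
  simp [trace]

end StdGaussianPDF

section KLClosedForm

lemma det_mul_transpose_rpow_neg_half {n : Type*} [Fintype n] [DecidableEq n]
    (L : Matrix n n ℝ) : (L * Lᵀ).det ^ (-(1 : ℝ) / 2) = |L.det|⁻¹ := by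
  rw [det_mul, det_transpose, ← abs_mul_abs_self, ← sq, ← Real.rpow_natCast,
    ← Real.rpow_mul (abs_nonneg _)]
  norm_num [Real.rpow_neg_one]

lemma mulVec_dotProduct_mulVec_self {n : Type*} [Fintype n] (A : Matrix n n ℝ) (x : n → ℝ) :
    A *ᵥ x ⬝ᵥ A *ᵥ x = x ⬝ᵥ (Aᵀ * A) *ᵥ x := by
  rw [← mulVec_mulVec, dotProduct_mulVec x Aᵀ, vecMul_transpose]

lemma integral_comp_mulVec {ι E : Type*} [Fintype ι] [DecidableEq ι] [NormedAddCommGroup E]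
    [NormedSpace ℝ E] {M : Matrix ι ι ℝ} (hM : M.det ≠ 0) (f : (ι → ℝ) → E) :
    ∫ x, f (M *ᵥ x) = |M.det|⁻¹ • ∫ y, f y := by
  have hinj : Function.Injective (toLin' M) :=
    mulVec_injective_iff_isUnit.2 ((isUnit_iff_isUnit_det M).2 (isUnit_iff_ne_zero.2 hM))
  have hemb := (LinearMap.isClosedEmbedding_of_injective
    (LinearMap.ker_eq_bot.2 hinj)).measurableEmbedding
  simp_rw [← toLin'_apply M]
  rw [← hemb.integral_map, Real.map_matrix_volume_pi_eq_smul_volume_pi hM,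
    integral_smul_measure]
  simp [abs_inv]

variable {n : ℕ}

lemma gaussianDensity_mul_transpose (L : Matrix (Fin n) (Fin n) ℝ) (y : Fin n → ℝ) :
    gaussianDensity n 0 (L * Lᵀ) y = |L.det|⁻¹ * stdGaussianPDF (L⁻¹ *ᵥ y) := by
  rw [gaussianDensity, stdGaussianPDF_eq, Fintype.card_fin, det_mul_transpose_rpow_neg_half,
    sub_zero, Matrix.mul_inv_rev, ← transpose_nonsing_inv, ← mulVec_mulVec, dotProduct_mulVec,
    vecMul_transpose]
  ring

lemma log_gaussianDensity_div_gaussianDensity {L₀ L₁ : Matrix (Fin n) (Fin n) ℝ}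
    (h₀ : L₀.det ≠ 0) (h₁ : L₁.det ≠ 0) (x : Fin n → ℝ) :
    Real.log (gaussianDensity n 0 (L₀ * L₀ᵀ) (L₀ *ᵥ x) / gaussianDensity n 0 (L₁ * L₁ᵀ) (L₀ *ᵥ x))
      = x ⬝ᵥ ((1 / 2 : ℝ) • ((L₁⁻¹ * L₀)ᵀ * (L₁⁻¹ * L₀) - 1)) *ᵥ x
        + (Real.log |L₁.det| - Real.log |L₀.det|) := by
  have hpos {L : Matrix (Fin n) (Fin n) ℝ} (h : L.det ≠ 0) (z : Fin n → ℝ) :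
      0 < |L.det|⁻¹ * stdGaussianPDF z :=
    mul_pos (inv_pos.2 (abs_pos.2 h)) (stdGaussianPDF_pos z)
  rw [gaussianDensity_mul_transpose, gaussianDensity_mul_transpose,
    Real.log_div (hpos h₀ _).ne' (hpos h₁ _).ne',
    Real.log_mul (by positivity [abs_pos.2 h₀]) (stdGaussianPDF_pos _).ne',
    Real.log_mul (by positivity [abs_pos.2 h₁]) (stdGaussianPDF_pos _).ne',
    log_stdGaussianPDF, log_stdGaussianPDF, mulVec_mulVec, mulVec_mulVec,
    nonsing_inv_mul _ (isUnit_iff_ne_zero.2 h₀), one_mulVec, mulVec_dotProduct_mulVec_self,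
    Real.log_inv, Real.log_inv]
  simp only [smul_mulVec, sub_mulVec, one_mulVec, dotProduct_smul, dotProduct_sub, smul_eq_mul]
  ring

theorem integral_gaussianDensity_mul_log_div {L₀ L₁ : Matrix (Fin n) (Fin n) ℝ}
    (h₀ : L₀.det ≠ 0) (h₁ : L₁.det ≠ 0) :
    ∫ y, gaussianDensity n 0 (L₀ * L₀ᵀ) y *
        Real.log (gaussianDensity n 0 (L₀ * L₀ᵀ) y / gaussianDensity n 0 (L₁ * L₁ᵀ) y)
      = Real.log |L₁.det| - Real.log |L₀.det|
        + (((L₁⁻¹ * L₀)ᵀ * (L₁⁻¹ * L₀)).trace - n) / 2 := by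
  set f : (Fin n → ℝ) → ℝ := fun y ↦ gaussianDensity n 0 (L₀ * L₀ᵀ) y *
    Real.log (gaussianDensity n 0 (L₀ * L₀ᵀ) y / gaussianDensity n 0 (L₁ * L₁ᵀ) y)
  set M : Matrix (Fin n) (Fin n) ℝ := (1 / 2 : ℝ) • ((L₁⁻¹ * L₀)ᵀ * (L₁⁻¹ * L₀) - 1)
  set c := Real.log |L₁.det| - Real.log |L₀.det|
  have hf (x : Fin n → ℝ) :
      |L₀.det| * f (L₀ *ᵥ x) = stdGaussianPDF x * (x ⬝ᵥ M *ᵥ x) + c * stdGaussianPDF x := by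
    simp only [f]
    rw [log_gaussianDensity_div_gaussianDensity h₀ h₁, gaussianDensity_mul_transpose,
      mulVec_mulVec, nonsing_inv_mul _ (isUnit_iff_ne_zero.2 h₀), one_mulVec, ← mul_assoc,
      mul_inv_cancel_left₀ (abs_ne_zero.2 h₀)]
    ring
  calc ∫ y, f y = |L₀.det| * ∫ x, f (L₀ *ᵥ x) := by
        rw [integral_comp_mulVec h₀, smul_eq_mul, mul_inv_cancel_left₀ (abs_ne_zero.2 h₀)]
    _ = M.trace + c := by
        rw [← integral_const_mul]
        simp_rw [hf]
        rw [integral_add (integrable_stdGaussianPDF_mul_dotProduct_mulVec M)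
          (integrable_stdGaussianPDF.const_mul c), integral_const_mul,
          integral_stdGaussianPDF_mul_dotProduct_mulVec, integral_stdGaussianPDF, mul_one]
    _ = c + (((L₁⁻¹ * L₀)ᵀ * (L₁⁻¹ * L₀)).trace - n) / 2 := by
        simp only [M, trace_smul, trace_sub, trace_one, Fintype.card_fin, smul_eq_mul]
        ring

end KLClosedForm

section EntrywiseBounds

lemma abs_mul_apply_le {l m n : Type*} [Fintype m] {M : Matrix l m ℝ} {N : Matrix m n ℝ}
    {a b : ℝ} (hM : ∀ i k, |M i k| ≤ a) (hN : ∀ k j, |N k j| ≤ b) (i : l) (j : n) :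
    |(M * N) i j| ≤ Fintype.card m * (a * b) := by
  rw [mul_apply]
  calc |∑ k, M i k * N k j| ≤ ∑ k, |M i k * N k j| := Finset.abs_sum_le_sum_abs _ _
    _ ≤ ∑ _k : m, a * b := Finset.sum_le_sum fun k _ ↦ by
        rw [abs_mul]
        exact mul_le_mul (hM i k) (hN k j) (abs_nonneg _) ((abs_nonneg _).trans (hM i k))
    _ = Fintype.card m * (a * b) := by simp

variable {n : Type*} [Fintype n]

lemma trace_le_of_abs_le {M : Matrix n n ℝ} {a : ℝ} (hM : ∀ i j, |M i j| ≤ a) :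
    M.trace ≤ Fintype.card n * a := by
  calc M.trace ≤ ∑ _i : n, a := Finset.sum_le_sum fun i _ ↦ (le_abs_self _).trans (hM i i)
    _ = Fintype.card n * a := by simp

lemma abs_inv_apply_le [DecidableEq n] {L : Matrix n n ℝ} {B δ : ℝ} (hδ : 0 < δ)
    (hdet : δ ≤ |L.det|) (hB : ∀ i j, |L i j| ≤ B) (i j : n) :
    |L⁻¹ i j| ≤ (Fintype.card n).factorial * max B 1 ^ Fintype.card n / δ := by
  have hadj : |L.adjugate i j| ≤ (Fintype.card n).factorial * max B 1 ^ Fintype.card n := by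
    have hentry (a b : n) : |L.updateRow j (Pi.single i 1) a b| ≤ max B 1 := by
      rw [updateRow_apply]
      split_ifs
      · rw [Pi.single_apply]
        split_ifs <;> simp
      · exact (hB a b).trans (le_max_left _ _)
    simpa [adjugate_apply, nsmul_eq_mul] using det_le (abv := AbsoluteValue.abs) hentry
  rw [inv_def, Ring.inverse_eq_inv, Matrix.smul_apply, smul_eq_mul, abs_mul, abs_inv,
    inv_mul_eq_div]
  exact div_le_div₀ (by positivity) hadj hδ hdet

end EntrywiseBounds

section Triangular

variable {n : Type*} [Fintype n] [LinearOrder n]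

lemma pow_card_le_abs_det_of_isLowerTriangular {L : Matrix n n ℝ} (hL : L.IsLowerTriangular)
    {c₀ : ℝ} (hc₀ : 0 ≤ c₀) (hd : ∀ j, c₀ ≤ |L j j|) : c₀ ^ Fintype.card n ≤ |L.det| := by
  rw [det_of_isLowerTriangular L hL, Finset.abs_prod]
  calc c₀ ^ Fintype.card n = ∏ _j : n, c₀ := by simp
    _ ≤ ∏ j, |L j j| := Finset.prod_le_prod (fun _ _ ↦ hc₀) fun j _ ↦ hd j

lemma log_abs_sub_log_abs_le {a b c₀ : ℝ} (hc₀ : 0 < c₀) (ha : c₀ ≤ |a|) (hb : b ≠ 0) :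
    Real.log |b| - Real.log |a| ≤ |b - a| / c₀ := by
  have ha₀ : 0 < |a| := hc₀.trans_le ha
  rw [← Real.log_div (abs_ne_zero.2 hb) ha₀.ne']
  calc Real.log (|b| / |a|) ≤ |b| / |a| - 1 := Real.log_le_sub_one_of_pos (by positivity)
    _ = (|b| - |a|) / |a| := by field_simp
    _ ≤ |b - a| / |a| := by gcongr; exact abs_sub_abs_le_abs_sub b a
    _ ≤ |b - a| / c₀ := by gcongr

lemma log_abs_det_sub_log_abs_det_le {L₀ L₁ : Matrix n n ℝ} (hT₀ : L₀.IsLowerTriangular)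
    (hT₁ : L₁.IsLowerTriangular) {c₀ : ℝ} (hc₀ : 0 < c₀)
    (hd₀ : ∀ j, c₀ ≤ |L₀ j j|) (hd₁ : ∀ j, L₁ j j ≠ 0) :
    Real.log |L₁.det| - Real.log |L₀.det| ≤ ∑ j, |L₁ j j - L₀ j j| / c₀ := by
  have hd₀' (j : n) : L₀ j j ≠ 0 := abs_pos.1 (hc₀.trans_le (hd₀ j))
  rw [det_of_isLowerTriangular L₀ hT₀, det_of_isLowerTriangular L₁ hT₁, Finset.abs_prod,
    Finset.abs_prod, Real.log_prod fun j _ ↦ abs_ne_zero.2 (hd₁ j),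
    Real.log_prod fun j _ ↦ abs_ne_zero.2 (hd₀' j), ← Finset.sum_sub_distrib]
  exact Finset.sum_le_sum fun j _ ↦ log_abs_sub_log_abs_le hc₀ (hd₀ j) (hd₁ j)

end Triangular

lemma trace_transpose_mul_one_add {n : Type*} [Fintype n] [DecidableEq n] (E : Matrix n n ℝ) :
    ((1 + E)ᵀ * (1 + E)).trace = Fintype.card n + 2 * E.trace + (Eᵀ * E).trace := by
  simp only [transpose_add, transpose_one, add_mul, mul_add, one_mul, mul_one, trace_add,
    trace_one, trace_transpose]
  ring

theorem integral_gaussianDensity_mul_log_div_le {n : ℕ} {c₀ B ε : ℝ} (hc₀ : 0 < c₀)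
    {L₀ L₁ : Matrix (Fin n) (Fin n) ℝ} (hT₀ : L₀.IsLowerTriangular) (hT₁ : L₁.IsLowerTriangular)
    (hd₀ : ∀ j, c₀ ≤ |L₀ j j|) (hd₁ : ∀ j, c₀ ≤ |L₁ j j|)
    (hB₀ : ∀ j k, |L₀ j k| ≤ B) (hB₁ : ∀ j k, |L₁ j k| ≤ B)
    (hε : ∀ j k, |L₀ j k - L₁ j k| ≤ ε) :
    ∫ y, gaussianDensity n 0 (L₀ * L₀ᵀ) y *
        Real.log (gaussianDensity n 0 (L₀ * L₀ᵀ) y / gaussianDensity n 0 (L₁ * L₁ᵀ) y)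
      ≤ (n / c₀ + n ^ 2 * (n.factorial * max B 1 ^ n / c₀ ^ n)
          + n ^ 4 * (n.factorial * max B 1 ^ n / c₀ ^ n) ^ 2 * B) * ε := by
  set K := n.factorial * max B 1 ^ n / c₀ ^ n
  have hdet₀ : c₀ ^ n ≤ |L₀.det| := by
    simpa using pow_card_le_abs_det_of_isLowerTriangular hT₀ hc₀.le hd₀
  have hdet₁ : c₀ ^ n ≤ |L₁.det| := by
    simpa using pow_card_le_abs_det_of_isLowerTriangular hT₁ hc₀.le hd₁
  have h₀ : L₀.det ≠ 0 := abs_pos.1 ((pow_pos hc₀ n).trans_le hdet₀)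
  have h₁ : L₁.det ≠ 0 := abs_pos.1 ((pow_pos hc₀ n).trans_le hdet₁)
  have hK (i j : Fin n) : |L₁⁻¹ i j| ≤ K := by
    simpa using abs_inv_apply_le (pow_pos hc₀ n) hdet₁ hB₁ i j
  have hA : L₁⁻¹ * L₀ = 1 + L₁⁻¹ * (L₀ - L₁) := by
    rw [Matrix.mul_sub, nonsing_inv_mul _ (isUnit_iff_ne_zero.2 h₁), add_sub_cancel]
  set E := L₁⁻¹ * (L₀ - L₁)
  have hE (i j : Fin n) : |E i j| ≤ n * (K * ε) := by
    simpa using abs_mul_apply_le hK (fun k j ↦ by simpa using hε k j) i j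
  have hE' (i j : Fin n) : |E i j| ≤ n * (K * (2 * B)) := by
    have hdiff (k l : Fin n) : |(L₀ - L₁) k l| ≤ 2 * B := by
      simpa [two_mul] using (abs_sub _ _).trans (add_le_add (hB₀ k l) (hB₁ k l))
    simpa using abs_mul_apply_le hK hdiff i j
  have hlog : Real.log |L₁.det| - Real.log |L₀.det| ≤ n * (ε / c₀) := by
    refine (log_abs_det_sub_log_abs_det_le hT₀ hT₁ hc₀ hd₀
      fun j ↦ abs_pos.1 (hc₀.trans_le (hd₁ j))).trans ?_
    refine (Finset.sum_le_sum fun j _ ↦ ?_).trans_eq (by simp : ∑ _j : Fin n, ε / c₀ = _)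
    exact div_le_div_of_nonneg_right ((abs_sub_comm _ _).trans_le (hε j j)) hc₀.le
  have htrE : E.trace ≤ n * (n * (K * ε)) := by simpa using trace_le_of_abs_le hE
  have htrEE : (Eᵀ * E).trace ≤ n * (n * (n * (K * ε) * (n * (K * (2 * B))))) := by
    have hEt (i j : Fin n) : |Eᵀ i j| ≤ n * (K * ε) := hE j i
    simpa using trace_le_of_abs_le (abs_mul_apply_le hEt hE')
  rw [integral_gaussianDensity_mul_log_div h₀ h₁, hA, trace_transpose_mul_one_add,
    Fintype.card_fin]
  linear_combination hlog + htrE + htrEE / 2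

/-- Kullback–Leibler bound `K(p₀,p₁) ≤ C ‖L₀ − L₁‖_∞` of Lemma B.1. -/
theorem kl_le_of_cholesky_close
    (D : ℕ) (hD : 2 ≤ D) (c₀ B : ℝ) (hc₀ : 0 < c₀) (hB : 0 < B) :
    ∃ C > 0, ∀ L₀ L₁ : Matrix (Fin D) (Fin D) ℝ,
      (∀ i j : Fin D, i < j → L₀ i j = 0) → (∀ i j : Fin D, i < j → L₁ i j = 0) →
      (∀ j : Fin D, c₀ ≤ |L₀ j j|) → (∀ j : Fin D, c₀ ≤ |L₁ j j|) →
      (∀ j k : Fin D, |L₀ j k| ≤ B) → (∀ j k : Fin D, |L₁ j k| ≤ B) →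
      (∫ y : Fin D → ℝ,
          gaussianDensity D 0 (L₀ * L₀ᵀ) y *
            Real.log (gaussianDensity D 0 (L₀ * L₀ᵀ) y
              / gaussianDensity D 0 (L₁ * L₁ᵀ) y))
        ≤ C * ⨆ j : Fin D, ⨆ k : Fin D, |L₀ j k - L₁ j k| := by
  have hD₀ : (0 : ℝ) < D := by exact_mod_cast (by omega : 0 < D)
  refine ⟨D / c₀ + D ^ 2 * (D.factorial * max B 1 ^ D / c₀ ^ D)
    + D ^ 4 * (D.factorial * max B 1 ^ D / c₀ ^ D) ^ 2 * B,
    by have := div_pos hD₀ hc₀; positivity, ?_⟩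
  intro L₀ L₁ hT₀ hT₁ hd₀ hd₁ hB₀ hB₁
  -- `hT₀` and `hT₁` are `Matrix.IsLowerTriangular` unfolded.
  refine integral_gaussianDensity_mul_log_div_le hc₀ hT₀ hT₁ hd₀ hd₁ hB₀ hB₁ fun j k ↦ ?_
  exact (le_ciSup (Finite.bddAbove_range fun k ↦ |L₀ j k - L₁ j k|) k).trans
    (le_ciSup (Finite.bddAbove_range fun j ↦ ⨆ k, |L₀ j k - L₁ j k|) j)
end

section
/- Let D ≥ 1, r > 0, h ∈ ℝ, and q, v, g, g' ∈ ℝ^D with ‖q‖ = r and ⟨q, v⟩ = 0. For x with ‖x‖ = r define P(x)w = w − (⟨x,w⟩/r²) · x. Set v⁻ = v − (h/2) · P(q)g and assume v⁻ ≠ 0. Define θ = ‖v⁻‖ h / r, q' = cos(θ) · q + (r/‖v⁻‖) sin(θ) · v⁻, v⁺ = −(‖v⁻‖/r) sin(θ) · q + cos(θ) · v⁻, and v' = v⁺ − (h/2) · P(q')g'. Then ‖q'‖ = r, ‖v⁺‖ = ‖v⁻‖, ⟨q', v⁺⟩ = 0, and ⟨q', v'⟩ = 0. -/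
open scoped RealInnerProductSpace

/-!
The half-steps `v ↦ v - (h/2) • P x g` subtract a vector tangent at `x`, so they keep
the velocity tangent. The full step is the flow along the great circle through `q` in the
direction `v⁻`: in the orthogonal frame `q, v⁻` it is a rotation by `θ`, rescaled so that
`‖q‖` and `‖v⁻‖` are the radii, and rotations preserve lengths and orthogonality.
-/

section

variable {E : Type*} [NormedAddCommGroup E] [InnerProductSpace ℝ E]

noncomputable def sphereTangentProj (r : ℝ) (x w : E) : E := w - (⟪x, w⟫ / r ^ 2) • x

theorem inner_sphereTangentProj {r : ℝ} {x : E} (hx : ‖x‖ = r) (w : E) :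
    ⟪x, sphereTangentProj r x w⟫ = 0 := by
  subst hx
  rcases eq_or_ne x 0 with rfl | hx0
  · simp
  have : ‖x‖ ≠ 0 := norm_ne_zero_iff.mpr hx0
  rw [sphereTangentProj, inner_sub_right, real_inner_smul_right, real_inner_self_eq_norm_sq]
  field_simp
  ring

theorem inner_sub_smul_sphereTangentProj {r c : ℝ} {x v : E} (hx : ‖x‖ = r) (hv : ⟪x, v⟫ = 0)
    (w : E) : ⟪x, v - c • sphereTangentProj r x w⟫ = 0 := by
  rw [inner_sub_right, real_inner_smul_right, inner_sphereTangentProj hx, hv]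
  ring

theorem inner_smul_add_smul_of_inner_eq_zero {x y : E} (hxy : ⟪x, y⟫ = 0) (a b c d : ℝ) :
    ⟪a • x + b • y, c • x + d • y⟫ = a * c * ‖x‖ ^ 2 + b * d * ‖y‖ ^ 2 := by
  have hyx : ⟪y, x⟫ = 0 := by rw [real_inner_comm, hxy]
  simp only [inner_add_left, inner_add_right, real_inner_smul_left, real_inner_smul_right,
    real_inner_self_eq_norm_sq, hxy, hyx]
  ring

/-- Position on the great circle through `x` with initial velocity `y`, after time `θ ‖x‖ / ‖y‖`. -/
noncomputable def greatCirclePos (x y : E) (θ : ℝ) : E :=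
  Real.cos θ • x + (‖x‖ / ‖y‖ * Real.sin θ) • y

noncomputable def greatCircleVel (x y : E) (θ : ℝ) : E :=
  (-(‖y‖ / ‖x‖) * Real.sin θ) • x + Real.cos θ • y

variable {x y : E}

theorem norm_greatCirclePos (hxy : ⟪x, y⟫ = 0) (hy : y ≠ 0) (θ : ℝ) :
    ‖greatCirclePos x y θ‖ = ‖x‖ := by
  have hy' : ‖y‖ ≠ 0 := norm_ne_zero_iff.mpr hy
  have hsq : ‖greatCirclePos x y θ‖ ^ 2 = ‖x‖ ^ 2 := by
    rw [← real_inner_self_eq_norm_sq, greatCirclePos, inner_smul_add_smul_of_inner_eq_zero hxy]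
    field_simp
    linear_combination ‖x‖ ^ 2 * Real.sin_sq_add_cos_sq θ
  exact (sq_eq_sq₀ (norm_nonneg _) (norm_nonneg _)).mp hsq

theorem norm_greatCircleVel (hxy : ⟪x, y⟫ = 0) (hx : x ≠ 0) (θ : ℝ) :
    ‖greatCircleVel x y θ‖ = ‖y‖ := by
  have hx' : ‖x‖ ≠ 0 := norm_ne_zero_iff.mpr hx
  have hsq : ‖greatCircleVel x y θ‖ ^ 2 = ‖y‖ ^ 2 := by
    rw [← real_inner_self_eq_norm_sq, greatCircleVel, inner_smul_add_smul_of_inner_eq_zero hxy]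
    field_simp
    linear_combination ‖y‖ ^ 2 * Real.sin_sq_add_cos_sq θ
  exact (sq_eq_sq₀ (norm_nonneg _) (norm_nonneg _)).mp hsq

theorem inner_greatCirclePos_greatCircleVel (hxy : ⟪x, y⟫ = 0) (θ : ℝ) :
    ⟪greatCirclePos x y θ, greatCircleVel x y θ⟫ = 0 := by
  rw [greatCirclePos, greatCircleVel, inner_smul_add_smul_of_inner_eq_zero hxy]
  rcases eq_or_ne x 0 with rfl | hx
  · simp
  rcases eq_or_ne y 0 with rfl | hy
  · simp
  have hx' : ‖x‖ ≠ 0 := norm_ne_zero_iff.mpr hx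
  have hy' : ‖y‖ ≠ 0 := norm_ne_zero_iff.mpr hy
  field_simp
  ring

end

theorem sphHMC_leapfrog_stays_on_sphere_general
    (D : ℕ) (r h : ℝ) (hr : 0 < r)
    (q v g g' : EuclideanSpace ℝ (Fin D))
    (hq : ‖q‖ = r) (hqv : ⟪q, v⟫ = 0)
    (P : EuclideanSpace ℝ (Fin D) → EuclideanSpace ℝ (Fin D)
          → EuclideanSpace ℝ (Fin D))
    (hP : ∀ x w, P x w = w - (⟪x, w⟫ / r ^ 2) • x)
    (vminus : EuclideanSpace ℝ (Fin D))
    (hvminus : vminus = v - (h / 2) • P q g) (hne : vminus ≠ 0)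
    (θ : ℝ)
    (q' vplus v' : EuclideanSpace ℝ (Fin D))
    (hq'def : q' = Real.cos θ • q + (r / ‖vminus‖ * Real.sin θ) • vminus)
    (hvplus : vplus = (-(‖vminus‖ / r) * Real.sin θ) • q + Real.cos θ • vminus)
    (hv' : v' = vplus - (h / 2) • P q' g') :
    ‖q'‖ = r ∧ ‖vplus‖ = ‖vminus‖ ∧ ⟪q', vplus⟫ = 0 ∧ ⟪q', v'⟫ = 0 := by
  obtain rfl : P = sphereTangentProj r := funext fun x => funext (hP x)
  have hq0 : q ≠ 0 := norm_pos_iff.mp (hq ▸ hr)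
  have hqvm : ⟪q, vminus⟫ = 0 := hvminus ▸ inner_sub_smul_sphereTangentProj hq hqv g
  subst hq hq'def hvplus
  have hq' : ‖greatCirclePos q vminus θ‖ = ‖q‖ := norm_greatCirclePos hqvm hne θ
  have htan := inner_greatCirclePos_greatCircleVel hqvm θ
  exact ⟨hq', norm_greatCircleVel hqvm hq0 θ, htan,
    hv' ▸ inner_sub_smul_sphereTangentProj hq' htan g'⟩

/-- One step of the geometric (leapfrog) integrator (3.3) of Spherical HMC keeps
the position on the sphere `S^{D−1}(r)` and the velocity in the tangent space. -/
theorem sphHMC_leapfrog_stays_on_sphere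
    (D : ℕ) (hD : 1 ≤ D) (r h : ℝ) (hr : 0 < r)
    (q v g g' : EuclideanSpace ℝ (Fin D))
    (hq : ‖q‖ = r) (hqv : ⟪q, v⟫ = 0)
    (P : EuclideanSpace ℝ (Fin D) → EuclideanSpace ℝ (Fin D)
          → EuclideanSpace ℝ (Fin D))
    (hP : ∀ x w, P x w = w - (⟪x, w⟫ / r ^ 2) • x)
    (vminus : EuclideanSpace ℝ (Fin D))
    (hvminus : vminus = v - (h / 2) • P q g) (hne : vminus ≠ 0)
    (θ : ℝ) (hθ : θ = ‖vminus‖ * h / r)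
    (q' vplus v' : EuclideanSpace ℝ (Fin D))
    (hq'def : q' = Real.cos θ • q + (r / ‖vminus‖ * Real.sin θ) • vminus)
    (hvplus : vplus = (-(‖vminus‖ / r) * Real.sin θ) • q + Real.cos θ • vminus)
    (hv' : v' = vplus - (h / 2) • P q' g') :
    ‖q'‖ = r ∧ ‖vplus‖ = ‖vminus‖ ∧ ⟪q', vplus⟫ = 0 ∧ ⟪q', v'⟫ = 0 :=
  sphHMC_leapfrog_stays_on_sphere_general D r h hr q v g g' hq hqv P hP vminus hvminus hne θ q'
    vplus v' hq'def hvplus hv'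
end
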